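/- arXiv:2512.24467 — 5 statements merged into one kernel-verified Lean document; each statement's English description precedes it below -/
import Mathlib

section
/- For every Pareto-efficient social choice function F and every array p of probability distributions over decompositions of the electorate, the SCF-based DSF Δ^p_F satisfies Weak Pareto Efficiency: for every profile R and every proposal x that is Pareto-dominated in R, either x ∉ Δ^p_F(R) or Δ^p_F(R) = X. -/
open scoped Classical

/-- A preference: a strict linear order on the set `X` of proposals, represented as a
ranking, i.e., a bijection assigning to every proposal its position (position `0` = top). -/
abbrev Pref (X : Type) [Fintype X] : Type := X ≃ Fin (Fintype.card X)

/-- A profile: a finite nonempty electorate `N ⊂ ℕ` together with a preference for each agent. -/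
structure Profile (X : Type) [Fintype X] : Type where
  agents : Finset ℕ
  agents_nonempty : agents.Nonempty
  pref : (i : ℕ) → i ∈ agents → Pref X

namespace Profile

variable {X : Type} [Fintype X]

/-- The position of proposal `x` in agent `i`'s ranking (top position is `1`). -/
def pos (R : Profile X) (i : ℕ) (hi : i ∈ R.agents) (x : X) : ℕ :=
  (R.pref i hi x : ℕ) + 1

/-- The profile `R ∘ σ`, obtained by relabelling agents via a bijection `σ : ℕ ≃ ℕ`;
it is defined on `σ⁻¹(N)`. -/
def comp (R : Profile X) (σ : ℕ ≃ ℕ) : Profile X where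
  agents := R.agents.map σ.symm.toEmbedding
  agents_nonempty := by simpa using R.agents_nonempty
  pref i hi := R.pref (σ i) (by
    obtain ⟨j, hj, hij⟩ := Finset.mem_map.mp hi
    simp only [Equiv.coe_toEmbedding] at hij
    subst hij
    simpa using hj)

/-- The profile `σ(R)`, obtained by applying a permutation `σ : X ≃ X` of the proposals
pointwise to every ranking (the position of `σ x` in `σ(R)` is the position of `x` in `R`). -/
def permute (R : Profile X) (σ : X ≃ X) : Profile X where
  agents := R.agents
  agents_nonempty := R.agents_nonempty
  pref i hi := σ.symm.trans (R.pref i hi)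

/-- The profile obtained from `R` by inverting every agent's ranking. -/
def invert (R : Profile X) : Profile X where
  agents := R.agents
  agents_nonempty := R.agents_nonempty
  pref i hi := (R.pref i hi).trans Fin.revPerm

/-- The profile `R^x̂`, obtained from `R` by moving proposal `x` to the top of every
agent's ranking (leaving the relative order of all other proposals unchanged). -/
def moveTop (R : Profile X) (x : X) : Profile X where
  agents := R.agents
  agents_nonempty := R.agents_nonempty
  pref i hi := (R.pref i hi).trans (Fin.cycleRange (R.pref i hi x))

/-- The restriction `R|_C` of profile `R` to a nonempty coalition `C ⊆ N`. -/
def restrict (R : Profile X) (C : Finset ℕ) (hne : C.Nonempty) (hsub : C ⊆ R.agents) :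
    Profile X where
  agents := C
  agents_nonempty := hne
  pref i hi := R.pref i (hsub hi)

/-- The union `R ⊕ R'` of two profiles with disjoint electorates. -/
def union (R R' : Profile X) (_h : Disjoint R.agents R'.agents) : Profile X where
  agents := R.agents ∪ R'.agents
  agents_nonempty := R.agents_nonempty.mono Finset.subset_union_left
  pref i hi :=
    if h1 : i ∈ R.agents then R.pref i h1
    else R'.pref i ((Finset.mem_union.mp hi).resolve_left h1)

/-- The number of agents in `R` reporting the preference `r`. -/
noncomputable def count (R : Profile X) (r : Pref X) : ℕ :=
  (R.agents.attach.filter fun i => R.pref i.1 i.2 = r).card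

/-- A profile is perfectly uniform if each possible preference occurs equally often in it. -/
def IsUniform (R : Profile X) : Prop := ∃ k : ℕ, ∀ r : Pref X, R.count r = k

/-- A profile is unanimous if all agents report the same ranking. -/
def IsUnanimous (R : Profile X) : Prop :=
  ∀ i (hi : i ∈ R.agents) j (hj : j ∈ R.agents), R.pref i hi = R.pref j hj

/-- Proposal `x` occurs in the same position in every agent's ranking in `R`. -/
def SamePos (R : Profile X) (x : X) : Prop :=
  ∀ i (hi : i ∈ R.agents) j (hj : j ∈ R.agents), R.pref i hi x = R.pref j hj x

/-- Proposal `x` is Pareto-dominated in `R`: some proposal `y` is ranked above `x`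
by every agent. -/
def ParetoDominated (R : Profile X) (x : X) : Prop :=
  ∃ y : X, ∀ i (hi : i ∈ R.agents), R.pref i hi y < R.pref i hi x

/-- Proposals `x` and `y` are clones in `R`: they are distinct and appear adjacent to one
another in every agent's ranking. -/
def Clones (R : Profile X) (x y : X) : Prop :=
  x ≠ y ∧ ∀ i (hi : i ∈ R.agents),
    (R.pref i hi x : ℕ) + 1 = (R.pref i hi y : ℕ) ∨
    (R.pref i hi y : ℕ) + 1 = (R.pref i hi x : ℕ)

end Profile

section Axioms

variable {X : Type} [Fintype X]

/-- A DSF (here: any map from profiles to sets of proposals) is proper if it always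
returns a nonempty set of proposals. -/
def IsDSF (Δ : Profile X → Set X) : Prop := ∀ R : Profile X, (Δ R).Nonempty

/-- Anonymity: `Δ(R) = Δ(R ∘ σ)` for every profile `R` and bijection `σ : ℕ ≃ ℕ`. -/
def Anonymity (Δ : Profile X → Set X) : Prop :=
  ∀ (R : Profile X) (σ : ℕ ≃ ℕ), Δ R = Δ (R.comp σ)

/-- Neutrality: `Δ(σ(R)) = σ(Δ(R))` for every profile `R` and permutation `σ : X ≃ X`. -/
def Neutrality (Δ : Profile X → Set X) : Prop :=
  ∀ (R : Profile X) (σ : X ≃ X), Δ (R.permute σ) = σ '' Δ R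

/-- Uniformity: `Δ(R) = X` for every perfectly uniform profile `R`. -/
def Uniformity (Δ : Profile X → Set X) : Prop :=
  ∀ R : Profile X, R.IsUniform → Δ R = Set.univ

/-- Weak Position Unanimity: if `x` occurs in the same position in every agent's ranking
in `R`, then `x ∉ Δ(R)` or `Δ(R) = X`. -/
def WeakPositionUnanimity (Δ : Profile X → Set X) : Prop :=
  ∀ (R : Profile X) (x : X), R.SamePos x → x ∉ Δ R ∨ Δ R = Set.univ

/-- Position Unanimity: if `R` is not unanimous and `x` occurs in the same position in
every agent's ranking in `R`, then `x ∉ Δ(R)`. -/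
def PositionUnanimity (Δ : Profile X → Set X) : Prop :=
  ∀ (R : Profile X) (x : X), ¬ R.IsUnanimous → R.SamePos x → x ∉ Δ R

/-- Pareto Efficiency: Pareto-dominated proposals are never selected. -/
def ParetoEfficiency (Δ : Profile X → Set X) : Prop :=
  ∀ (R : Profile X) (x : X), R.ParetoDominated x → x ∉ Δ R

/-- Weak Pareto Efficiency: for every Pareto-dominated proposal `x` of a profile `R`,
either `x ∉ Δ(R)` or `Δ(R) = X`. -/
def WeakParetoEfficiency (Δ : Profile X → Set X) : Prop :=
  ∀ (R : Profile X) (x : X), R.ParetoDominated x → x ∉ Δ R ∨ Δ R = Set.univ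

/-- Inversion Invariance: `Δ(R) = Δ(R')` whenever `R'` is obtained from `R` by inverting
every agent's ranking. -/
def InversionInvariance (Δ : Profile X → Set X) : Prop :=
  ∀ R : Profile X, Δ R = Δ R.invert

/-- Clone Consistency: if `x` and `x'` are clones in `R`, `x` and `y` are not clones in `R`,
and `{x,y} ⊆ Δ(R)`, then `x' ∈ Δ(R)`. -/
def CloneConsistency (Δ : Profile X → Set X) : Prop :=
  ∀ (R : Profile X) (x x' y : X), R.Clones x x' → ¬ R.Clones x y →
    x ∈ Δ R → y ∈ Δ R → x' ∈ Δ R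

/-- Uniform Reinforcement: `Δ(R) = Δ(R ⊕ R^U)` for every profile `R` and every perfectly
uniform profile `R^U` with electorate disjoint from that of `R`. -/
def UniformReinforcement (Δ : Profile X → Set X) : Prop :=
  ∀ (R RU : Profile X) (h : Disjoint R.agents RU.agents),
    RU.IsUniform → Δ R = Δ (R.union RU h)

end Axioms
section Score

variable {X : Type} [Fintype X]

/-- A scoring function `s` is normalised positional if it is induced by a scoring vector
`(s_1, ..., s_m)`: `s(R|_C, x) = (1/|C|) · Σ_{i ∈ C} s_{pos_i(x)}`. -/
def IsNormPositional (s : Profile X → X → ℝ) : Prop :=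
  ∃ v : Fin (Fintype.card X) → ℝ, ∀ (R : Profile X) (x : X),
    s R x = (∑ i ∈ R.agents.attach, v (R.pref i.1 i.2 x)) / R.agents.card

/-- `div_s(R, x, C, C̄)`: the absolute difference of the scores of `x` in the restrictions
of `R` to `C` and to its complement `C̄ = N \ C` (and `0` if either part is empty). -/
noncomputable def divScore (s : Profile X → X → ℝ) (R : Profile X) (x : X) (C : Finset ℕ) : ℝ :=
  if h : C ⊆ R.agents ∧ C.Nonempty ∧ (R.agents \ C).Nonempty then
    |s (R.restrict C h.2.1 h.1) x -
      s (R.restrict (R.agents \ C) h.2.2 Finset.sdiff_subset) x|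
  else 0

/-- `p` is an array of probability distributions over decompositions of the electorate:
for each profile `R` and proposal `x`, `p R x` is nonnegative and the values `p R x C`
over all `C ⊆ N` sum to `1`.  (Each unordered decomposition `{C, C̄}` thus receives
probability `p R x C + p R x C̄`.) -/
def IsDecompDist (p : Profile X → X → Finset ℕ → ℝ) : Prop :=
  ∀ (R : Profile X) (x : X),
    (∀ C, 0 ≤ p R x C) ∧ (∑ C ∈ R.agents.powerset, p R x C) = 1

/-- The score-based DSF `Δ^p_s`: it selects the proposals maximising the expected
score difference between the two parts of a sampled decomposition of the electorate. -/
noncomputable def scoreDSF (s : Profile X → X → ℝ) (p : Profile X → X → Finset ℕ → ℝ)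
    (R : Profile X) : Set X :=
  {x | ∀ y : X, (∑ C ∈ R.agents.powerset, p R y C * divScore s R y C)
      ≤ ∑ C ∈ R.agents.powerset, p R x C * divScore s R x C}

/-- The normalised Plurality scoring function (scoring vector `(1, 0, ..., 0)`). -/
noncomputable def pluralityScore (R : Profile X) (x : X) : ℝ :=
  ((R.agents.attach.filter fun i => (R.pref i.1 i.2 x : ℕ) = 0).card : ℝ) / R.agents.card

/-- The normalised Borda scoring function (scoring vector `(m-1, m-2, ..., 0)`). -/
noncomputable def normBordaScore (R : Profile X) (x : X) : ℝ :=
  (∑ i ∈ R.agents.attach,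
    ((Fintype.card X : ℝ) - (((R.pref i.1 i.2 x : ℕ) : ℝ) + 1))) / R.agents.card

end Score

section SCF

variable {X : Type} [Fintype X]

/-- A social choice function is Pareto-efficient if it never selects a Pareto-dominated
proposal. -/
def ParetoEfficientSCF (F : Profile X → Finset X) : Prop :=
  ∀ (R : Profile X) (x : X), R.ParetoDominated x → x ∉ F R

/-- `div_F(R, x, C, C̄) = | [x ∈ F(R|_C)]/|F(R|_C)| - [x ∈ F(R|_C̄)]/|F(R|_C̄)| |`
(and `0` if either part of the decomposition is empty). -/
noncomputable def divSCF (F : Profile X → Finset X) (R : Profile X) (x : X) (C : Finset ℕ) : ℝ :=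
  if h : C ⊆ R.agents ∧ C.Nonempty ∧ (R.agents \ C).Nonempty then
    |(if x ∈ F (R.restrict C h.2.1 h.1) then ((F (R.restrict C h.2.1 h.1)).card : ℝ)⁻¹ else 0) -
      (if x ∈ F (R.restrict (R.agents \ C) h.2.2 Finset.sdiff_subset) then
        ((F (R.restrict (R.agents \ C) h.2.2 Finset.sdiff_subset)).card : ℝ)⁻¹ else 0)|
  else 0

/-- The SCF-based DSF `Δ^p_F`. -/
noncomputable def scfDSF (F : Profile X → Finset X) (p : Profile X → X → Finset ℕ → ℝ)
    (R : Profile X) : Set X :=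
  {x | ∀ y : X, (∑ C ∈ R.agents.powerset, p R y C * divSCF F R y C)
      ≤ ∑ C ∈ R.agents.powerset, p R x C * divSCF F R x C}

/-- The Borda score of `x` in `R`: `Σ_{i ∈ N} (m − pos_i(x))`. -/
noncomputable def bordaScore (R : Profile X) (x : X) : ℕ :=
  ∑ i ∈ R.agents.attach, (Fintype.card X - R.pos i.1 i.2 x)

/-- The Borda rule: the SCF selecting the proposals with maximal Borda score. -/
noncomputable def bordaRule (R : Profile X) : Finset X :=
  Finset.univ.filter fun x => ∀ y : X, bordaScore R y ≤ bordaScore R x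

end SCF

section Index

variable {X : Type} [Fintype X]

/-- A profile index function `δ` is neutral if it is invariant under permutations
of the proposals. -/
def NeutralIndex (δ : Profile X → ℝ) : Prop :=
  ∀ (R : Profile X) (σ : X ≃ X), δ (R.permute σ) = δ R

/-- The profile-index-based DSF `Δ_δ`: it selects the proposals `x` minimising `δ(R^x̂)`. -/
noncomputable def indexDSF (δ : Profile X → ℝ) (R : Profile X) : Set X :=
  {x | ∀ y : X, δ (R.moveTop x) ≤ δ (R.moveTop y)}

/-- The Kendall tau distance between two rankings: the number of (unordered) pairs of
distinct proposals on whose relative ranking the two rankings disagree (counted here as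
ordered pairs with a fixed orientation of the disagreement). -/
noncomputable def kendallTau (r r' : Pref X) : ℕ :=
  (Finset.univ.filter fun q : X × X => r q.1 < r q.2 ∧ r' q.2 < r' q.1).card

/-- The average Kendall tau distance over all unordered pairs of distinct agents of the
profile (`0` for single-agent profiles), here computed via ordered pairs. -/
noncomputable def deltaKT (R : Profile X) : ℝ :=
  (∑ i ∈ R.agents.attach, ∑ j ∈ R.agents.attach,
      if i ≠ j then (kendallTau (R.pref i.1 i.2) (R.pref j.1 j.2) : ℝ) else 0) /
    ((R.agents.card : ℝ) * ((R.agents.card : ℝ) - 1))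

end Index

section RankVar

variable {X : Type} [Fintype X]

/-- The mean position `μ^R(x)` of proposal `x` in profile `R`. -/
noncomputable def meanPos (R : Profile X) (x : X) : ℝ :=
  (∑ i ∈ R.agents.attach, (R.pos i.1 i.2 x : ℝ)) / R.agents.card

/-- The variance of the positions at which proposal `x` occurs in profile `R`. -/
noncomputable def rankVar (R : Profile X) (x : X) : ℝ :=
  (∑ i ∈ R.agents.attach, ((R.pos i.1 i.2 x : ℝ) - meanPos R x) ^ 2) / R.agents.card

/-- The rank-variance DSF `Δ_var`. -/
noncomputable def rankVarDSF (R : Profile X) : Set X :=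
  {x | ∀ y : X, rankVar R y ≤ rankVar R x}

end RankVar
/-- For every Pareto-efficient SCF `F` and every array `p` of
probability distributions over decompositions of the electorate, the SCF-based DSF
`Δ^p_F` satisfies Weak Pareto Efficiency: for every profile `R` and Pareto-dominated
proposal `x`, either `x ∉ Δ^p_F(R)` or `Δ^p_F(R) = X`. -/
theorem divisiveness_stmt11 (X : Type) [Fintype X]
    (F : Profile X → Finset X) (hFne : ∀ R : Profile X, (F R).Nonempty)
    (hF : ParetoEfficientSCF F)
    (p : Profile X → X → Finset ℕ → ℝ) (hp : IsDecompDist p) :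
    ∀ (R : Profile X) (x : X), R.ParetoDominated x →
      x ∉ scfDSF F p R ∨ scfDSF F p R = Set.univ := by
  intro R x hdom
  obtain ⟨y, hy⟩ := hdom
  -- x's divisiveness is 0 for every coalition
  have hdiv0 : ∀ C : Finset ℕ, divSCF F R x C = 0 := by
    intro C
    unfold divSCF
    split
    · rename_i h
      have h1 : x ∉ F (R.restrict C h.2.1 h.1) :=
        hF _ x ⟨y, fun i hi => hy i (h.1 hi)⟩
      have h2 : x ∉ F (R.restrict (R.agents \ C) h.2.2 Finset.sdiff_subset) :=
        hF _ x ⟨y, fun i hi => hy i (Finset.sdiff_subset hi)⟩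
      simp [h1, h2]
    · rfl
  have hx0 : (∑ C ∈ R.agents.powerset, p R x C * divSCF F R x C) = 0 := by
    apply Finset.sum_eq_zero
    intro C _
    rw [hdiv0 C, mul_zero]
  have hnn : ∀ (z : X), 0 ≤ ∑ C ∈ R.agents.powerset, p R z C * divSCF F R z C := by
    intro z
    apply Finset.sum_nonneg
    intro C _
    apply mul_nonneg ((hp R z).1 C)
    unfold divSCF
    split
    · exact abs_nonneg _
    · exact le_refl 0
  by_cases hx : x ∈ scfDSF F p R
  · right
    ext z
    simp only [Set.mem_univ, iff_true]
    intro w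
    have hw : (∑ C ∈ R.agents.powerset, p R w C * divSCF F R w C) ≤ 0 := by
      have := hx w
      rwa [hx0] at this
    calc (∑ C ∈ R.agents.powerset, p R w C * divSCF F R w C) ≤ 0 := hw
      _ ≤ _ := hnn z
  · exact Or.inl hx
end

section
/- For every array p of probability distributions over decompositions of the electorate, the score-based DSF induced by the normalised Plurality scoring function satisfies Weak Pareto Efficiency: for every profile R and every proposal x that is Pareto-dominated in R, either x ∉ Δ^p_s(R) or Δ^p_s(R) = X. -/
open scoped Classical

/-- For every array `p` of probability distributions over
decompositions of the electorate, the score-based DSF induced by the normalised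
Plurality scoring function satisfies Weak Pareto Efficiency. -/
theorem divisiveness_stmt12 (X : Type) [Fintype X]
    (p : Profile X → X → Finset ℕ → ℝ) (hp : IsDecompDist p) :
    ∀ (R : Profile X) (x : X), R.ParetoDominated x →
      x ∉ scoreDSF pluralityScore p R ∨ scoreDSF pluralityScore p R = Set.univ := by
  intro R x hx
  obtain ⟨y, hy⟩ := hx
  -- x is never top-ranked, so its plurality score is 0 in every restriction
  have hpl : ∀ (C : Finset ℕ) (hne : C.Nonempty) (hsub : C ⊆ R.agents),
      pluralityScore (R.restrict C hne hsub) x = 0 := by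
    intro C hne hsub
    unfold pluralityScore
    have hfil : (Finset.filter (fun i => ((R.restrict C hne hsub).pref i.1 i.2 x : ℕ) = 0)
        (R.restrict C hne hsub).agents.attach) = ∅ := by
      apply Finset.filter_eq_empty_iff.mpr
      intro i _
      have h1 : ((R.pref i.1 (hsub i.2)) y : ℕ) < ((R.pref i.1 (hsub i.2)) x : ℕ) :=
        hy i.1 (hsub i.2)
      show ¬ ((R.pref i.1 (hsub i.2)) x : ℕ) = 0
      omega
    rw [hfil]
    simp
  have hdiv0 : ∀ C : Finset ℕ, divScore pluralityScore R x C = 0 := by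
    intro C
    unfold divScore
    split
    · next h =>
        rw [hpl C h.2.1 h.1, hpl (R.agents \ C) h.2.2 Finset.sdiff_subset]
        simp
    · rfl
  have hsumx : (∑ C ∈ R.agents.powerset, p R x C * divScore pluralityScore R x C) = 0 := by
    apply Finset.sum_eq_zero
    intro C _
    rw [hdiv0 C, mul_zero]
  have hdivnn : ∀ (z : X) (C : Finset ℕ), 0 ≤ divScore pluralityScore R z C := by
    intro z C
    unfold divScore
    split
    · exact abs_nonneg _
    · exact le_refl 0
  have hsumnn : ∀ z : X, 0 ≤ ∑ C ∈ R.agents.powerset, p R z C * divScore pluralityScore R z C := by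
    intro z
    apply Finset.sum_nonneg
    intro C _
    exact mul_nonneg ((hp R z).1 C) (hdivnn z C)
  by_cases hmem : x ∈ scoreDSF pluralityScore p R
  · right
    ext z
    simp only [Set.mem_univ, iff_true]
    intro w
    have hw : (∑ C ∈ R.agents.powerset, p R w C * divScore pluralityScore R w C) ≤ 0 := by
      have := hmem w
      rwa [hsumx] at this
    exact hw.trans (hsumnn z)
  · left; exact hmem
end

section
/- Let |X| = 5 with X = {a,b,c,x,y}, let F be the Borda rule, and let p assign to each profile and proposal the uniform distribution over all unordered decompositions {C,C̄} of the electorate. Then the SCF-based DSF Δ^p_F violates Weak Position Unanimity: for the three-agent profile R with rankings a≻x≻y≻b≻c, b≻x≻y≻c≻a, and c≻x≻y≻a≻b, we have Δ^p_F(R) = {x}, even though x occurs in the same (second) position in every ranking and Δ^p_F(R) ≠ X. -/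
open scoped Classical

private lemma restrict_eq_of_eq {X : Type} [Fintype X] (R : Profile X) {s t : Finset ℕ}
    (h : s = t) (hne : s.Nonempty) (hsub : s ⊆ R.agents)
    (hne' : t.Nonempty) (hsub' : t ⊆ R.agents) :
    R.restrict s hne hsub = R.restrict t hne' hsub' := by
  subst h; rfl

private lemma bordaRule_eq_singleton {X : Type} [Fintype X] (R : Profile X) (w : X)
    (h : ∀ z, z ≠ w → bordaScore R z < bordaScore R w) : bordaRule R = {w} := by
  ext z
  simp only [bordaRule, Finset.mem_filter, Finset.mem_univ, true_and, Finset.mem_singleton]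
  constructor
  · intro hz
    by_contra hne
    exact absurd (hz w) (not_le.mpr (h z hne))
  · rintro rfl z'
    by_cases hz : z' = z
    · exact hz ▸ le_refl _
    · exact (h z' hz).le

private noncomputable def qfun {X : Type} [Fintype X] (R : Profile X) : ℕ → X → ℕ :=
  fun i z => if h : i ∈ R.agents then Fintype.card X - ((R.pref i h z : ℕ) + 1) else 0

private lemma qfun_pos {X : Type} [Fintype X] (R : Profile X) {i : ℕ} (hi : i ∈ R.agents)
    (z : X) : qfun R i z = Fintype.card X - ((R.pref i hi z : ℕ) + 1) := dif_pos hi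

private noncomputable def Wfun {X : Type} (a b c x : X) : Finset ℕ → Finset X := fun C =>
  if C = {0} then {a} else if C = {1} then {b} else if C = {2} then {c} else {x}

private lemma Wfun_card {X : Type} (a b c x : X) (D : Finset ℕ) :
    (Wfun a b c x D).card = 1 := by
  simp only [Wfun]; split_ifs <;> rfl

private lemma Wfun_0 {X : Type} (a b c x : X) : Wfun a b c x {0} = {a} := by
  simp [Wfun]

private lemma Wfun_1 {X : Type} (a b c x : X) : Wfun a b c x {1} = {b} := by
  simp [Wfun]

private lemma Wfun_2 {X : Type} (a b c x : X) : Wfun a b c x {2} = {c} := by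
  simp [Wfun]

private lemma Wfun_01 {X : Type} (a b c x : X) : Wfun a b c x {0, 1} = {x} := by
  simp only [Wfun]; rw [if_neg (by decide), if_neg (by decide), if_neg (by decide)]

private lemma Wfun_02 {X : Type} (a b c x : X) : Wfun a b c x {0, 2} = {x} := by
  simp only [Wfun]; rw [if_neg (by decide), if_neg (by decide), if_neg (by decide)]

private lemma Wfun_12 {X : Type} (a b c x : X) : Wfun a b c x {1, 2} = {x} := by
  simp only [Wfun]; rw [if_neg (by decide), if_neg (by decide), if_neg (by decide)]

/-- Let `|X| = 5` with `X = {a,b,c,x,y}`, let `F` be the Borda rule,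
and let `p` assign to each profile and proposal the uniform distribution over all
unordered decompositions `{C, C̄}` of the electorate (so each subset `C ⊆ N` gets
probability `1/2^{|N|}`).  Then the SCF-based DSF `Δ^p_F` violates Weak Position
Unanimity: for the three-agent profile `R` with rankings `a ≻ x ≻ y ≻ b ≻ c`,
`b ≻ x ≻ y ≻ c ≻ a`, and `c ≻ x ≻ y ≻ a ≻ b`, we have `Δ^p_F(R) = {x}`, even though
`x` occurs in the same (second) position in every ranking and `Δ^p_F(R) ≠ X`. -/
theorem divisiveness_stmt14 (X : Type) [Fintype X] (hcard : Fintype.card X = 5)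
    (a b c x y : X) (hab : a ≠ b) (hac : a ≠ c) (hax : a ≠ x) (hay : a ≠ y)
    (hbc : b ≠ c) (hbx : b ≠ x) (hby : b ≠ y) (hcx : c ≠ x) (hcy : c ≠ y) (hxy : x ≠ y)
    (p : Profile X → X → Finset ℕ → ℝ)
    (hp : ∀ (R : Profile X) (z : X) (C : Finset ℕ),
      p R z C = 1 / 2 ^ R.agents.card)
    (R : Profile X) (hag : R.agents = {0, 1, 2})
    (h0 : 0 ∈ R.agents) (h1 : 1 ∈ R.agents) (h2 : 2 ∈ R.agents)
    -- agent 0 reports a ≻ x ≻ y ≻ b ≻ c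
    (h0a : (R.pref 0 h0 a : ℕ) = 0) (h0x : (R.pref 0 h0 x : ℕ) = 1)
    (h0y : (R.pref 0 h0 y : ℕ) = 2) (h0b : (R.pref 0 h0 b : ℕ) = 3)
    (h0c : (R.pref 0 h0 c : ℕ) = 4)
    -- agent 1 reports b ≻ x ≻ y ≻ c ≻ a
    (h1b : (R.pref 1 h1 b : ℕ) = 0) (h1x : (R.pref 1 h1 x : ℕ) = 1)
    (h1y : (R.pref 1 h1 y : ℕ) = 2) (h1c : (R.pref 1 h1 c : ℕ) = 3)
    (h1a : (R.pref 1 h1 a : ℕ) = 4)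
    -- agent 2 reports c ≻ x ≻ y ≻ a ≻ b
    (h2c : (R.pref 2 h2 c : ℕ) = 0) (h2x : (R.pref 2 h2 x : ℕ) = 1)
    (h2y : (R.pref 2 h2 y : ℕ) = 2) (h2a : (R.pref 2 h2 a : ℕ) = 3)
    (h2b : (R.pref 2 h2 b : ℕ) = 4) :
    R.SamePos x ∧ scfDSF bordaRule p R = {x} ∧ scfDSF bordaRule p R ≠ Set.univ := by
  classical
  -- Step 1: enumeration of X
  have hcard5 : ({a, b, c, x, y} : Finset X).card = 5 := by
    rw [Finset.card_insert_of_notMem (by simp [hab, hac, hax, hay]),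
        Finset.card_insert_of_notMem (by simp [hbc, hbx, hby]),
        Finset.card_insert_of_notMem (by simp [hcx, hcy]),
        Finset.card_insert_of_notMem (by simp [hxy]),
        Finset.card_singleton]
  have huniv : ∀ z : X, z = a ∨ z = b ∨ z = c ∨ z = x ∨ z = y := by
    intro z
    have h : z ∈ ({a, b, c, x, y} : Finset X) := by
      rw [Finset.eq_univ_of_card _ (hcard5.trans hcard.symm)]
      exact Finset.mem_univ z
    simpa using h
  have hmemN : ∀ i, i ∈ R.agents → i = 0 ∨ i = 1 ∨ i = 2 := by
    intro i hi; rw [hag] at hi; simpa using hi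
  -- Step 2: borda scores on restrictions
  have key : ∀ (C : Finset ℕ) (hne : C.Nonempty) (hsub : C ⊆ R.agents) (z : X),
      bordaScore (R.restrict C hne hsub) z = ∑ i ∈ C, qfun R i z := by
    intro C hne hsub z
    rw [← Finset.sum_attach C (fun i => qfun R i z)]
    show (∑ i ∈ C.attach, (Fintype.card X - ((R.pref i.1 (hsub i.2) z : ℕ) + 1)))
        = ∑ i ∈ C.attach, qfun R i.1 z
    refine Finset.sum_congr rfl fun i _ => ?_
    rw [qfun_pos R (hsub i.2)]
  have s0 : ∀ z : X, (∑ i ∈ ({0} : Finset ℕ), qfun R i z) = qfun R 0 z := fun z => by simp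
  have s1 : ∀ z : X, (∑ i ∈ ({1} : Finset ℕ), qfun R i z) = qfun R 1 z := fun z => by simp
  have s2 : ∀ z : X, (∑ i ∈ ({2} : Finset ℕ), qfun R i z) = qfun R 2 z := fun z => by simp
  have s01 : ∀ z : X, (∑ i ∈ ({0, 1} : Finset ℕ), qfun R i z) = qfun R 0 z + qfun R 1 z :=
    fun z => by rw [Finset.sum_insert (by decide), Finset.sum_singleton]
  have s02 : ∀ z : X, (∑ i ∈ ({0, 2} : Finset ℕ), qfun R i z) = qfun R 0 z + qfun R 2 z :=
    fun z => by rw [Finset.sum_insert (by decide), Finset.sum_singleton]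
  have s12 : ∀ z : X, (∑ i ∈ ({1, 2} : Finset ℕ), qfun R i z) = qfun R 1 z + qfun R 2 z :=
    fun z => by rw [Finset.sum_insert (by decide), Finset.sum_singleton]
  have s012 : ∀ z : X, (∑ i ∈ ({0, 1, 2} : Finset ℕ), qfun R i z)
      = qfun R 0 z + (qfun R 1 z + qfun R 2 z) :=
    fun z => by
      rw [Finset.sum_insert (by decide), Finset.sum_insert (by decide), Finset.sum_singleton]
  -- agent-wise score values
  have q0a : qfun R 0 a = 4 := by simp [qfun_pos R h0, h0a, hcard]
  have q0b : qfun R 0 b = 1 := by simp [qfun_pos R h0, h0b, hcard]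
  have q0c : qfun R 0 c = 0 := by simp [qfun_pos R h0, h0c, hcard]
  have q0x : qfun R 0 x = 3 := by simp [qfun_pos R h0, h0x, hcard]
  have q0y : qfun R 0 y = 2 := by simp [qfun_pos R h0, h0y, hcard]
  have q1a : qfun R 1 a = 0 := by simp [qfun_pos R h1, h1a, hcard]
  have q1b : qfun R 1 b = 4 := by simp [qfun_pos R h1, h1b, hcard]
  have q1c : qfun R 1 c = 1 := by simp [qfun_pos R h1, h1c, hcard]
  have q1x : qfun R 1 x = 3 := by simp [qfun_pos R h1, h1x, hcard]
  have q1y : qfun R 1 y = 2 := by simp [qfun_pos R h1, h1y, hcard]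
  have q2a : qfun R 2 a = 1 := by simp [qfun_pos R h2, h2a, hcard]
  have q2b : qfun R 2 b = 0 := by simp [qfun_pos R h2, h2b, hcard]
  have q2c : qfun R 2 c = 4 := by simp [qfun_pos R h2, h2c, hcard]
  have q2x : qfun R 2 x = 3 := by simp [qfun_pos R h2, h2x, hcard]
  have q2y : qfun R 2 y = 2 := by simp [qfun_pos R h2, h2y, hcard]
  -- Step 3: the Borda winners of all restrictions
  have BR : ∀ (C : Finset ℕ) (hne : C.Nonempty) (hsub : C ⊆ R.agents),
      C ⊆ ({0, 1, 2} : Finset ℕ) →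
      bordaRule (R.restrict C hne hsub) = Wfun a b c x C := by
    intro C hne hsub hC
    have hmem : C ∈ ({0, 1, 2} : Finset ℕ).powerset := Finset.mem_powerset.mpr hC
    rw [show ({0, 1, 2} : Finset ℕ).powerset
        = ({∅, {0}, {1}, {0, 1}, {2}, {0, 2}, {1, 2}, {0, 1, 2}} : Finset (Finset ℕ)) from
      by decide] at hmem
    simp only [Finset.mem_insert, Finset.mem_singleton] at hmem
    rcases hmem with rfl | rfl | rfl | rfl | rfl | rfl | rfl | rfl
    · exact absurd hne (by simp)
    · rw [Wfun_0]
      refine bordaRule_eq_singleton _ a fun z hz => ?_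
      rcases huniv z with rfl | rfl | rfl | rfl | rfl <;>
        first
          | exact absurd rfl hz
          | simp [key _ hne hsub, s0, q0a, q0b, q0c, q0x, q0y]
    · rw [Wfun_1]
      refine bordaRule_eq_singleton _ b fun z hz => ?_
      rcases huniv z with rfl | rfl | rfl | rfl | rfl <;>
        first
          | exact absurd rfl hz
          | simp [key _ hne hsub, s1, q1a, q1b, q1c, q1x, q1y]
    · rw [Wfun_01]
      refine bordaRule_eq_singleton _ x fun z hz => ?_
      rcases huniv z with rfl | rfl | rfl | rfl | rfl <;>
        first
          | exact absurd rfl hz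
          | simp [key _ hne hsub, s01, q0a, q0b, q0c, q0x, q0y, q1a, q1b, q1c, q1x, q1y]
    · rw [Wfun_2]
      refine bordaRule_eq_singleton _ c fun z hz => ?_
      rcases huniv z with rfl | rfl | rfl | rfl | rfl <;>
        first
          | exact absurd rfl hz
          | simp [key _ hne hsub, s2, q2a, q2b, q2c, q2x, q2y]
    · rw [Wfun_02]
      refine bordaRule_eq_singleton _ x fun z hz => ?_
      rcases huniv z with rfl | rfl | rfl | rfl | rfl <;>
        first
          | exact absurd rfl hz
          | simp [key _ hne hsub, s02, q0a, q0b, q0c, q0x, q0y, q2a, q2b, q2c, q2x, q2y]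
    · rw [Wfun_12]
      refine bordaRule_eq_singleton _ x fun z hz => ?_
      rcases huniv z with rfl | rfl | rfl | rfl | rfl <;>
        first
          | exact absurd rfl hz
          | simp [key _ hne hsub, s12, q1a, q1b, q1c, q1x, q1y, q2a, q2b, q2c, q2x, q2y]
    · have hW : Wfun a b c x ({0, 1, 2} : Finset ℕ) = {x} := by
        simp only [Wfun]; rw [if_neg (by decide), if_neg (by decide), if_neg (by decide)]
      rw [hW]
      refine bordaRule_eq_singleton _ x fun z hz => ?_
      rcases huniv z with rfl | rfl | rfl | rfl | rfl <;>
        first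
          | exact absurd rfl hz
          | simp [key _ hne hsub, s012, q0a, q0b, q0c, q0x, q0y, q1a, q1b, q1c, q1x, q1y,
              q2a, q2b, q2c, q2x, q2y]
  -- Step 4: divergence values
  have hsubA : ∀ C : Finset ℕ, C ⊆ ({0, 1, 2} : Finset ℕ) → C ⊆ R.agents := by
    intro C hC; rw [hag]; exact hC
  have DIV : ∀ (z : X) (C : Finset ℕ), C ⊆ ({0, 1, 2} : Finset ℕ) → C.Nonempty →
      (({0, 1, 2} : Finset ℕ) \ C).Nonempty →
      divSCF bordaRule R z C =
        |(if z ∈ Wfun a b c x C then (1 : ℝ) else 0) -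
          (if z ∈ Wfun a b c x (({0, 1, 2} : Finset ℕ) \ C) then (1 : ℝ) else 0)| := by
    intro z C hC hne hne'
    have hCa : C ⊆ R.agents := hsubA C hC
    have hD : R.agents \ C = ({0, 1, 2} : Finset ℕ) \ C := by rw [hag]
    have hne2 : (R.agents \ C).Nonempty := by rw [hD]; exact hne'
    have hDC : ({0, 1, 2} : Finset ℕ) \ C ⊆ ({0, 1, 2} : Finset ℕ) := Finset.sdiff_subset
    have hDa : ({0, 1, 2} : Finset ℕ) \ C ⊆ R.agents := hsubA _ hDC
    unfold divSCF
    rw [dif_pos ⟨hCa, hne, hne2⟩]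
    rw [restrict_eq_of_eq R hD hne2 Finset.sdiff_subset hne' hDa]
    rw [BR C hne hCa hC, BR _ hne' hDa hDC]
    rw [Wfun_card, Wfun_card]
    norm_num
  -- Step 5: the expected-divergence sums
  have hcard3 : R.agents.card = 3 := by rw [hag]; rfl
  have hpv : ∀ (z : X) (C : Finset ℕ), p R z C = 1 / 8 := by
    intro z C; rw [hp, hcard3]; norm_num
  have hpow : R.agents.powerset
      = ({∅, {0}, {1}, {0, 1}, {2}, {0, 2}, {1, 2}, {0, 1, 2}} : Finset (Finset ℕ)) := by
    rw [hag]; decide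
  have hdiv_empty : ∀ z : X, divSCF bordaRule R z ∅ = 0 := by
    intro z; unfold divSCF
    rw [dif_neg (by rintro ⟨-, h, -⟩; simp at h)]
  have hdiv_full : ∀ z : X, divSCF bordaRule R z {0, 1, 2} = 0 := by
    intro z; unfold divSCF
    rw [dif_neg ?_]
    rintro ⟨-, -, h⟩
    rw [hag] at h
    simp at h
  have SUM : ∀ z : X, (∑ C ∈ R.agents.powerset, p R z C * divSCF bordaRule R z C)
      = 1 / 8 * (divSCF bordaRule R z {0} + divSCF bordaRule R z {1}
        + divSCF bordaRule R z {0, 1} + divSCF bordaRule R z {2}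
        + divSCF bordaRule R z {0, 2} + divSCF bordaRule R z {1, 2}) := by
    intro z
    rw [hpow]
    rw [Finset.sum_insert (by decide), Finset.sum_insert (by decide),
        Finset.sum_insert (by decide), Finset.sum_insert (by decide),
        Finset.sum_insert (by decide), Finset.sum_insert (by decide),
        Finset.sum_insert (by decide), Finset.sum_singleton]
    rw [hdiv_empty, hdiv_full]
    simp only [hpv]
    ring
  have d0 := fun z => DIV z {0} (by decide) (by decide) (by decide)
  have d1 := fun z => DIV z {1} (by decide) (by decide) (by decide)
  have d2 := fun z => DIV z {2} (by decide) (by decide) (by decide)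
  have d01 := fun z => DIV z {0, 1} (by decide) (by decide) (by decide)
  have d02 := fun z => DIV z {0, 2} (by decide) (by decide) (by decide)
  have d12 := fun z => DIV z {1, 2} (by decide) (by decide) (by decide)
  have E0 : ({0, 1, 2} : Finset ℕ) \ {0} = {1, 2} := by decide
  have E1 : ({0, 1, 2} : Finset ℕ) \ {1} = {0, 2} := by decide
  have E2 : ({0, 1, 2} : Finset ℕ) \ {2} = {0, 1} := by decide
  have E01 : ({0, 1, 2} : Finset ℕ) \ {0, 1} = {2} := by decide
  have E02 : ({0, 1, 2} : Finset ℕ) \ {0, 2} = {1} := by decide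
  have E12 : ({0, 1, 2} : Finset ℕ) \ {1, 2} = {0} := by decide
  have val : ∀ z : X, (∑ C ∈ R.agents.powerset, p R z C * divSCF bordaRule R z C)
      = 1 / 8 * (|(if z ∈ ({a} : Finset X) then (1 : ℝ) else 0)
          - (if z ∈ ({x} : Finset X) then (1 : ℝ) else 0)|
        + |(if z ∈ ({b} : Finset X) then (1 : ℝ) else 0)
          - (if z ∈ ({x} : Finset X) then (1 : ℝ) else 0)|
        + |(if z ∈ ({x} : Finset X) then (1 : ℝ) else 0)
          - (if z ∈ ({c} : Finset X) then (1 : ℝ) else 0)|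
        + |(if z ∈ ({c} : Finset X) then (1 : ℝ) else 0)
          - (if z ∈ ({x} : Finset X) then (1 : ℝ) else 0)|
        + |(if z ∈ ({x} : Finset X) then (1 : ℝ) else 0)
          - (if z ∈ ({b} : Finset X) then (1 : ℝ) else 0)|
        + |(if z ∈ ({x} : Finset X) then (1 : ℝ) else 0)
          - (if z ∈ ({a} : Finset X) then (1 : ℝ) else 0)|) := by
    intro z
    rw [SUM, d0 z, d1 z, d2 z, d01 z, d02 z, d12 z, E0, E1, E2, E01, E02, E12,
        Wfun_0, Wfun_1, Wfun_2, Wfun_01, Wfun_02, Wfun_12]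
  have Sa : (∑ C ∈ R.agents.powerset, p R a C * divSCF bordaRule R a C) = 1 / 4 := by
    rw [val a]
    simp only [Finset.mem_singleton]
    norm_num [hab, hac, hax, hay, hbc, hbx, hby, hcx, hcy, hxy, Ne.symm hab, Ne.symm hac,
      Ne.symm hax, Ne.symm hay, Ne.symm hbc, Ne.symm hbx, Ne.symm hby, Ne.symm hcx,
      Ne.symm hcy, Ne.symm hxy, abs_one, abs_zero, abs_neg, zero_sub, sub_zero]
  have Sb : (∑ C ∈ R.agents.powerset, p R b C * divSCF bordaRule R b C) = 1 / 4 := by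
    rw [val b]
    simp only [Finset.mem_singleton]
    norm_num [hab, hac, hax, hay, hbc, hbx, hby, hcx, hcy, hxy, Ne.symm hab, Ne.symm hac,
      Ne.symm hax, Ne.symm hay, Ne.symm hbc, Ne.symm hbx, Ne.symm hby, Ne.symm hcx,
      Ne.symm hcy, Ne.symm hxy, abs_one, abs_zero, abs_neg, zero_sub, sub_zero]
  have Sc : (∑ C ∈ R.agents.powerset, p R c C * divSCF bordaRule R c C) = 1 / 4 := by
    rw [val c]
    simp only [Finset.mem_singleton]
    norm_num [hab, hac, hax, hay, hbc, hbx, hby, hcx, hcy, hxy, Ne.symm hab, Ne.symm hac,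
      Ne.symm hax, Ne.symm hay, Ne.symm hbc, Ne.symm hbx, Ne.symm hby, Ne.symm hcx,
      Ne.symm hcy, Ne.symm hxy, abs_one, abs_zero, abs_neg, zero_sub, sub_zero]
  have Sx : (∑ C ∈ R.agents.powerset, p R x C * divSCF bordaRule R x C) = 3 / 4 := by
    rw [val x]
    simp only [Finset.mem_singleton]
    norm_num [hab, hac, hax, hay, hbc, hbx, hby, hcx, hcy, hxy, Ne.symm hab, Ne.symm hac,
      Ne.symm hax, Ne.symm hay, Ne.symm hbc, Ne.symm hbx, Ne.symm hby, Ne.symm hcx,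
      Ne.symm hcy, Ne.symm hxy, abs_one, abs_zero, abs_neg, zero_sub, sub_zero]
  have Sy : (∑ C ∈ R.agents.powerset, p R y C * divSCF bordaRule R y C) = 0 := by
    rw [val y]
    simp only [Finset.mem_singleton]
    norm_num [hab, hac, hax, hay, hbc, hbx, hby, hcx, hcy, hxy, Ne.symm hab, Ne.symm hac,
      Ne.symm hax, Ne.symm hay, Ne.symm hbc, Ne.symm hbx, Ne.symm hby, Ne.symm hcx,
      Ne.symm hcy, Ne.symm hxy, abs_one, abs_zero, abs_neg, zero_sub, sub_zero]
  -- Step 6: conclusion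
  have hset : scfDSF bordaRule p R = {x} := by
    ext z
    simp only [scfDSF, Set.mem_setOf_eq, Set.mem_singleton_iff]
    constructor
    · intro h
      have hx := h x
      rw [Sx] at hx
      rcases huniv z with rfl | rfl | rfl | rfl | rfl
      · rw [Sa] at hx; norm_num at hx
      · rw [Sb] at hx; norm_num at hx
      · rw [Sc] at hx; norm_num at hx
      · rfl
      · rw [Sy] at hx; norm_num at hx
    · rintro rfl w
      rcases huniv w with rfl | rfl | rfl | rfl | rfl
      · rw [Sa, Sx]; norm_num
      · rw [Sb, Sx]; norm_num
      · rw [Sc, Sx]; norm_num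
      · exact le_refl _
      · rw [Sy, Sx]; norm_num
  refine ⟨?_, hset, ?_⟩
  · intro i hi j hj
    have hx1 : ∀ k (hk : k ∈ R.agents), (R.pref k hk x : ℕ) = 1 := by
      intro k hk
      rcases hmemN k hk with rfl | rfl | rfl
      · exact h0x
      · exact h1x
      · exact h2x
    exact Fin.ext (by rw [hx1 i hi, hx1 j hj])
  · intro hU
    rw [hset] at hU
    have hy : y ∈ ({x} : Set X) := by rw [hU]; exact Set.mem_univ y
    exact hxy (Set.mem_singleton_iff.mp hy).symm
end

section
/- Let δ_KT be the profile index function mapping each profile with at least two agents to the average Kendall tau distance over all unordered pairs of distinct agents' rankings (and single-agent profiles to 0). Then the profile-index-based DSF Δ_{δ_KT} satisfies Uniform Reinforcement. -/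
open scoped Classical

/-
Write `δ_KT(R^x̂) = N_R(x) / (n(n-1))`, where `N_R(x) = ∑_{r,s} c(r) c(s) d(r^x̂, s^x̂)`, `d` is the
Kendall tau distance and `c(r)` the number of agents with preference `r`. Adding a perfectly
uniform profile with `k` copies of every preference replaces `c` by `c + k`, which by symmetry of
`d` adds `∑_r k (2c(r) + k) ∑_s d(r^x̂, s^x̂)` to the numerator. The inner sum does not depend on
`x`: relabelling the proposals so that `r^ŷ` becomes `r^x̂` permutes the preferences `s`, turns
`s^ŷ` into `s^x̂`, and preserves `d`. So the numerator changes by a constant and the minimisers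
stay the same (with a single agent, `n(n-1) = 0` and the numerator vanishes identically).
-/

open Finset

namespace Pref

variable {X : Type} [Fintype X]

def moveTop (x : X) (r : Pref X) : Pref X := r.trans (Fin.cycleRange (r x))

@[simp]
theorem moveTop_apply_self (x : X) (r : Pref X) : (moveTop x r x : ℕ) = 0 := by
  have : NeZero (Fintype.card X) := ⟨(r x).pos.ne'⟩
  simp [moveTop]

theorem moveTop_trans (σ : X ≃ X) (y : X) (s : Pref X) :
    moveTop y (σ.trans s) = σ.trans (moveTop (σ y) s) := rfl

end Pref

section KendallTau

variable {X : Type} [Fintype X]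

theorem kendallTau_self (r : Pref X) : kendallTau r r = 0 := by
  simp only [kendallTau, card_eq_zero, filter_eq_empty_iff]
  rintro q - ⟨h₁, h₂⟩
  exact lt_asymm h₁ h₂

theorem kendallTau_comm (r s : Pref X) : kendallTau r s = kendallTau s r := by
  refine card_nbij' Prod.swap Prod.swap ?_ ?_ (fun _ _ => rfl) (fun _ _ => rfl) <;>
    simp +contextual [Set.MapsTo]

theorem kendallTau_trans (σ : X ≃ X) (r s : Pref X) :
    kendallTau (σ.trans r) (σ.trans s) = kendallTau r s := by
  refine card_equiv (σ.prodCongr σ) fun q => ?_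
  rw [mem_filter, mem_filter]
  simp

theorem sum_kendallTau_moveTop_eq (r : Pref X) (x y : X) :
    ∑ s, (kendallTau (Pref.moveTop x r) (Pref.moveTop x s) : ℝ) =
      ∑ s, (kendallTau (Pref.moveTop y r) (Pref.moveTop y s) : ℝ) := by
  -- `σ` carries `r^ŷ` to `r^x̂`, hence `y` to `x` (both are on top).
  set σ : X ≃ X := (Pref.moveTop y r).trans (Pref.moveTop x r).symm
  have hσr : σ.trans (Pref.moveTop x r) = Pref.moveTop y r := by ext; simp [σ]
  have hσy : σ y = x := (Pref.moveTop x r).symm_apply_eq.mpr <| by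
    ext; simp
  calc ∑ s, (kendallTau (Pref.moveTop x r) (Pref.moveTop x s) : ℝ)
      = ∑ s, (kendallTau (Pref.moveTop y r) (Pref.moveTop y (σ.trans s)) : ℝ) := by
        refine sum_congr rfl fun s _ => ?_
        rw [Pref.moveTop_trans, hσy, ← hσr, kendallTau_trans]
    _ = _ := (Equiv.equivCongr σ.symm (Equiv.refl _)).sum_comp
        fun s => (kendallTau (Pref.moveTop y r) (Pref.moveTop y s) : ℝ)

end KendallTau

namespace Profile

variable {X : Type} [Fintype X]

theorem sum_attach_pref_eq_sum_count {M : Type*} [AddCommMonoid M] (R : Profile X)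
    (f : Pref X → M) : ∑ i ∈ R.agents.attach, f (R.pref i.1 i.2) = ∑ r, R.count r • f r := by
  rw [← sum_fiberwise' R.agents.attach (fun i => R.pref i.1 i.2) f]
  simp only [sum_const]
  rfl

theorem sum_attach_union_pref {M : Type*} [AddCommMonoid M] (R R' : Profile X)
    (h : Disjoint R.agents R'.agents) (f : Pref X → M) :
    ∑ i ∈ (R.union R' h).agents.attach, f ((R.union R' h).pref i.1 i.2) =
      ∑ i ∈ R.agents.attach, f (R.pref i.1 i.2) + ∑ i ∈ R'.agents.attach, f (R'.pref i.1 i.2) := by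
  set g : ℕ → M := fun i =>
    if hi : i ∈ (R.union R' h).agents then f ((R.union R' h).pref i hi) else 0
  have hg : ∀ (S : Profile X) (hS : S.agents ⊆ (R.union R' h).agents),
      (∀ i (hi : i ∈ S.agents), (R.union R' h).pref i (hS hi) = S.pref i hi) →
      ∑ i ∈ S.agents.attach, f (S.pref i.1 i.2) = ∑ i ∈ S.agents, g i := by
    intro S hS hpref
    rw [← sum_attach S.agents g]
    refine sum_congr rfl fun i _ => ?_
    simp only [g, dif_pos (hS i.2), hpref i.1 i.2]
  rw [hg _ subset_rfl fun _ _ => rfl, hg R subset_union_left fun i hi => dif_pos hi,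
    hg R' subset_union_right fun i hi => dif_neg (disjoint_right.mp h hi)]
  exact sum_union h

theorem count_union (R R' : Profile X) (h : Disjoint R.agents R'.agents) (r : Pref X) :
    (R.union R' h).count r = R.count r + R'.count r := by
  simp only [count, card_filter]
  exact sum_attach_union_pref R R' h fun s => if s = r then 1 else 0

theorem sum_sum_pref_eq_sum_sum_count (R : Profile X) (F : Pref X → Pref X → ℝ) :
    ∑ i ∈ R.agents.attach, ∑ j ∈ R.agents.attach, F (R.pref i.1 i.2) (R.pref j.1 j.2) =
      ∑ r, ∑ s, (R.count r * R.count s : ℝ) * F r s := by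
  calc _ = ∑ i ∈ R.agents.attach, ∑ s, R.count s • F (R.pref i.1 i.2) s :=
        sum_congr rfl fun i _ => R.sum_attach_pref_eq_sum_count (F (R.pref i.1 i.2))
    _ = ∑ r, R.count r • ∑ s, R.count s • F r s :=
        R.sum_attach_pref_eq_sum_count fun r => ∑ s, R.count s • F r s
    _ = _ := by simp only [nsmul_eq_mul, mul_sum, mul_assoc]

noncomputable def kendallTauTotal (R : Profile X) : ℝ :=
  ∑ i ∈ R.agents.attach, ∑ j ∈ R.agents.attach,
    (kendallTau (R.pref i.1 i.2) (R.pref j.1 j.2) : ℝ)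

theorem deltaKT_eq_kendallTauTotal_div (R : Profile X) :
    deltaKT R = R.kendallTauTotal / (R.agents.card * (R.agents.card - 1)) := by
  rw [deltaKT, kendallTauTotal]
  congr 1
  refine sum_congr rfl fun i _ => sum_congr rfl fun j _ => ?_
  rcases eq_or_ne i j with rfl | hij
  · simp [kendallTau_self]
  · exact if_pos hij

theorem kendallTauTotal_eq_zero_of_card_le_one {R : Profile X} (hR : R.agents.card ≤ 1) :
    R.kendallTauTotal = 0 := by
  refine sum_eq_zero fun i hi => sum_eq_zero fun j hj => ?_
  rw [card_le_one.mp (by rwa [card_attach]) i hi j hj, kendallTau_self, Nat.cast_zero]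

end Profile

section MoveTopKendallSum

variable {X : Type} [Fintype X]

noncomputable def moveTopKendallSum (w : Pref X → ℝ) (x : X) : ℝ :=
  ∑ r, ∑ s, w r * w s * kendallTau (Pref.moveTop x r) (Pref.moveTop x s)

theorem Profile.kendallTauTotal_moveTop (R : Profile X) (x : X) :
    (R.moveTop x).kendallTauTotal = moveTopKendallSum (fun r => R.count r) x :=
  R.sum_sum_pref_eq_sum_sum_count fun r s => kendallTau (Pref.moveTop x r) (Pref.moveTop x s)

theorem moveTopKendallSum_add_const (w : Pref X → ℝ) (k : ℝ) (x : X) :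
    moveTopKendallSum (fun r => w r + k) x = moveTopKendallSum w x +
      ∑ r, k * (2 * w r + k) * ∑ s, (kendallTau (Pref.moveTop x r) (Pref.moveTop x s) : ℝ) := by
  set F : Pref X → Pref X → ℝ := fun r s => kendallTau (Pref.moveTop x r) (Pref.moveTop x s)
  have hsymm : ∑ r, ∑ s, w s * F r s = ∑ r, w r * ∑ s, F r s := by
    rw [sum_comm]
    simp only [F, mul_sum, kendallTau_comm]
  calc moveTopKendallSum (fun r => w r + k) x
      = ∑ r, ∑ s, (w r * w s * F r s + (k * w r + k ^ 2) * F r s + k * (w s * F r s)) :=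
        sum_congr rfl fun r _ => sum_congr rfl fun s _ => by ring
    _ = moveTopKendallSum w x + ∑ r, (k * w r + k ^ 2) * ∑ s, F r s +
          k * ∑ r, ∑ s, w s * F r s := by
        simp only [sum_add_distrib, mul_sum]
        rfl
    _ = _ := by
        rw [hsymm, mul_sum, add_assoc, ← sum_add_distrib]
        congr 1
        exact sum_congr rfl fun r _ => by ring

theorem mem_indexDSF_deltaKT_iff (R : Profile X) (x : X) :
    x ∈ indexDSF deltaKT R ↔ ∀ y,
      moveTopKendallSum (fun r => R.count r) x ≤ moveTopKendallSum (fun r => R.count r) y := by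
  have hδ : ∀ z, deltaKT (R.moveTop z) = moveTopKendallSum (fun r => R.count r) z /
      (R.agents.card * (R.agents.card - 1)) := fun z => by
    rw [Profile.deltaKT_eq_kendallTauTotal_div, R.kendallTauTotal_moveTop]
    rfl
  rcases Nat.lt_or_ge 1 R.agents.card with hn | hn
  · have hD : (0 : ℝ) < R.agents.card * (R.agents.card - 1) := by
      have : (1 : ℝ) < R.agents.card := by exact_mod_cast hn
      nlinarith
    simp only [indexDSF, Set.mem_ofPred_eq, hδ, div_le_div_iff_of_pos_right hD]
  · have h0 : ∀ z, moveTopKendallSum (fun r => R.count r) z = 0 := fun z => by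
      rw [← R.kendallTauTotal_moveTop]
      exact Profile.kendallTauTotal_eq_zero_of_card_le_one hn
    simp [indexDSF, hδ, h0]

end MoveTopKendallSum

/-- Let `δ_KT` be the profile index function mapping each profile with
at least two agents to the average Kendall tau distance over all unordered pairs of
distinct agents' rankings (and single-agent profiles to `0`).  Then the
profile-index-based DSF `Δ_{δ_KT}` satisfies Uniform Reinforcement. -/
theorem divisiveness_stmt16 (X : Type) [Fintype X] :
    UniformReinforcement (indexDSF (deltaKT : Profile X → ℝ)) := by
  rintro R RU h ⟨k, hk⟩
  have hcount : (fun r => ((R.union RU h).count r : ℝ)) = fun r => (R.count r : ℝ) + k := by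
    ext r
    rw [R.count_union RU h, hk, Nat.cast_add]
  ext x
  simp only [mem_indexDSF_deltaKT_iff, hcount, moveTopKendallSum_add_const]
  refine forall_congr' fun y => ?_
  simp only [sum_kendallTau_moveTop_eq _ x y, add_le_add_iff_right]
end

section
/- Let s be the normalised Borda scoring function, and let p be an array of probability distributions over decompositions of the electorate such that p_{R,x} = p_{R',x} whenever R' is obtained from R by inverting every agent's ranking. Then the score-based DSF Δ^p_s satisfies Inversion Invariance. -/
open scoped Classical

/-! Inverting every ranking replaces the normalised Borda score `s` of a proposal by `(m - 1) - s`
in every subprofile, so each score difference `div_s` only changes sign; since `p` is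
inversion-invariant as well, every proposal keeps its objective value. -/

namespace Profile

variable {X : Type} [Fintype X]

lemma invert_pref_val (R : Profile X) (i : ℕ) (hi : i ∈ R.agents) (x : X) :
    ((R.invert.pref i hi x : ℕ) : ℝ) = (Fintype.card X : ℝ) - 1 - (R.pref i hi x : ℕ) := by
  have hlt := (R.pref i hi x).isLt
  simp only [invert, Equiv.trans_apply, Fin.revPerm_apply, Fin.val_rev]
  rw [Nat.cast_sub hlt]
  push_cast
  ring

end Profile

section Invert

variable {X : Type} [Fintype X]

lemma normBordaScore_invert (R : Profile X) (x : X) :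
    normBordaScore R.invert x = ((Fintype.card X : ℝ) - 1) - normBordaScore R x := by
  have hN : (R.agents.card : ℝ) ≠ 0 := by
    exact_mod_cast R.agents_nonempty.card_pos.ne'
  have hterm : ∀ i ∈ R.agents.attach,
      (Fintype.card X : ℝ) - ((R.invert.pref i.1 i.2 x : ℕ) + 1)
        = ((Fintype.card X : ℝ) - 1) - ((Fintype.card X : ℝ) - ((R.pref i.1 i.2 x : ℕ) + 1)) := by
    intro i _
    rw [Profile.invert_pref_val]
    ring
  change (∑ i ∈ R.agents.attach, _) / (R.agents.card : ℝ) = _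
  rw [Finset.sum_congr rfl hterm, Finset.sum_sub_distrib, Finset.sum_const, Finset.card_attach,
    nsmul_eq_mul, normBordaScore, sub_div, mul_div_cancel_left₀ _ hN]

lemma divScore_invert_of_score_invert {s : Profile X → X → ℝ} {c : ℝ}
    (hs : ∀ R x, s R.invert x = c - s R x) (R : Profile X) (x : X) (C : Finset ℕ) :
    divScore s R.invert x C = divScore s R x C := by
  unfold divScore
  split_ifs with hinv h h
  · have hC : s (R.invert.restrict C hinv.2.1 hinv.1) x = c - s (R.restrict C h.2.1 h.1) x :=
      hs (R.restrict C h.2.1 h.1) x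
    have hCc : s (R.invert.restrict (R.invert.agents \ C) hinv.2.2 Finset.sdiff_subset) x
        = c - s (R.restrict (R.agents \ C) h.2.2 Finset.sdiff_subset) x :=
      hs (R.restrict (R.agents \ C) h.2.2 Finset.sdiff_subset) x
    rw [hC, hCc, sub_sub_sub_cancel_left, abs_sub_comm]
  · exact absurd hinv h
  · exact absurd h hinv
  · rfl

lemma inversionInvariance_scoreDSF {s : Profile X → X → ℝ} {p : Profile X → X → Finset ℕ → ℝ}
    (hp : ∀ R x C, p R x C = p R.invert x C)
    (hs : ∀ R x C, divScore s R.invert x C = divScore s R x C) :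
    InversionInvariance (scoreDSF s p) := by
  intro R
  have hobj : ∀ x, ∑ C ∈ R.invert.agents.powerset, p R.invert x C * divScore s R.invert x C
      = ∑ C ∈ R.agents.powerset, p R x C * divScore s R x C := fun x =>
    Finset.sum_congr rfl fun C _ => by rw [← hp, hs]
  ext x
  simp only [scoreDSF, Set.mem_ofPred_eq, hobj]

end Invert

theorem divisiveness_stmt17_general (X : Type) [Fintype X]
    (p : Profile X → X → Finset ℕ → ℝ)
    (hpinv : ∀ (R : Profile X) (x : X) (C : Finset ℕ), p R x C = p R.invert x C) :
    InversionInvariance (scoreDSF normBordaScore p) :=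
  inversionInvariance_scoreDSF hpinv (divScore_invert_of_score_invert normBordaScore_invert)

/-- Let `s` be the normalised Borda scoring function and let `p` be an
array of probability distributions over decompositions of the electorate such that
`p_{R,x} = p_{R',x}` whenever `R'` is obtained from `R` by inverting every agent's
ranking.  Then the score-based DSF `Δ^p_s` satisfies Inversion Invariance. -/
theorem divisiveness_stmt17 (X : Type) [Fintype X]
    (p : Profile X → X → Finset ℕ → ℝ) (hp : IsDecompDist p)
    (hpinv : ∀ (R : Profile X) (x : X) (C : Finset ℕ), p R x C = p R.invert x C) :
    InversionInvariance (scoreDSF normBordaScore p) :=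
  divisiveness_stmt17_general X p hpinv
end
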